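/- arXiv:2408.12523 — 12 statements merged into one kernel-verified Lean document; each statement's English description precedes it below -/
import Mathlib

section
/- If for every pair of agents i, j the weighted envy-freeness inequality v_i(A_i)/w_i ≥ v_i(A_j)/w_j holds with subsidies p, i.e., (v_i(A_i)+p_i)/w_i ≥ (v_i(A_j)+p_j)/w_j, then every cycle in the weighted envy graph G_A (with edge weight w(i,j) = v_i(A_j)/w_j − v_i(A_i)/w_i) has non-positive total weight. -/
/-- Total weight of a path (list of agents) in a weighted directed graph. -/
def pathWeight {ι : Type*} (W : ι → ι → ℝ) : List ι → ℝ
  | a :: b :: l => W a b + pathWeight W (b :: l)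
  | _ => 0

lemma pathWeight_le_potential {ι : Type*} (W : ι → ι → ℝ) (φ : ι → ℝ)
    (h : ∀ i j, W i j ≤ φ i - φ j) :
    ∀ (l : List ι) (a : ι),
      pathWeight W (a :: l) ≤ φ a - φ ((a :: l).getLast (by simp)) := by
  intro l
  induction l with
  | nil => intro a; simp [pathWeight]
  | cons b l ih =>
      intro a
      have h1 := ih b
      have h2 := h a b
      have : (a :: b :: l).getLast (by simp) = (b :: l).getLast (by simp) := by
        simp [List.getLast]
      rw [this]
      simp only [pathWeight]
      linarith

/-- If the outcome (A, p) is weighted envy-free, then every cycle in the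
weighted envy graph has non-positive total weight. -/
theorem stmt0 {ι H : Type*} (v : ι → H → ℝ) (w : ι → ℝ) (A : ι → H)
    (hw : ∀ i, 0 < w i) (hv : ∀ i h, 0 ≤ v i h) (hA : Function.Injective A)
    (p : ι → ℝ) (hp : ∀ i, 0 ≤ p i)
    (hWEF : ∀ i j, (v i (A j) + p j) / w j ≤ (v i (A i) + p i) / w i)
    (c : List ι) (hc : c ≠ []) (hcyc : c.head? = c.getLast?) :
    pathWeight (fun i j => v i (A j) / w j - v i (A i) / w i) c ≤ 0 := by
  obtain ⟨a, l, rfl⟩ := List.exists_cons_of_ne_nil hc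
  have key : ∀ i j, v i (A j) / w j - v i (A i) / w i ≤ p i / w i - p j / w j := by
    intro i j
    have := hWEF i j
    rw [add_div, add_div] at this
    linarith
  have hlast : a = (a :: l).getLast (by simp) := by
    have := hcyc
    rw [List.head?_cons, (List.getLast?_eq_getLast (by simp) : (a :: l).getLast? = _)] at this
    exact Option.some_injective _ this
  have := pathWeight_le_potential (fun i j => v i (A j) / w j - v i (A i) / w i)
    (fun i => p i / w i) key l a
  rw [← hlast] at this
  simpa using this
end

section
/- If the weighted envy graph G_A of an allocation A has no positive-weight cycle, then setting p_i = w_i · ℓ(i), where ℓ(i) is the maximum weight of a path starting at i in G_A, yields a non-negative subsidy vector making the outcome (A, p) weighted envy-free, i.e., (v_i(A_i)+p_i)/w_i ≥ (v_i(A_j)+p_j)/w_j for all agents i, j. -/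
/-- If the weighted envy graph has no positive-weight cycle, then
p_i = w_i * ℓ(i), where ℓ(i) is the maximum weight of a path starting at i,
is a non-negative subsidy vector making the outcome weighted envy-free. -/
theorem stmt1 {ι H : Type*} (v : ι → H → ℝ) (w : ι → ℝ) (A : ι → H)
    (hw : ∀ i, 0 < w i) (hv : ∀ i h, 0 ≤ v i h) (hA : Function.Injective A)
    (ℓ : ι → ℝ)
    (hub : ∀ i (l : List ι), l.head? = some i →
      pathWeight (fun i j => v i (A j) / w j - v i (A i) / w i) l ≤ ℓ i)
    (hmax : ∀ i, ∃ l : List ι, l.head? = some i ∧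
      pathWeight (fun i j => v i (A j) / w j - v i (A i) / w i) l = ℓ i)
    (hnocycle : ∀ c : List ι, c ≠ [] → c.head? = c.getLast? →
      pathWeight (fun i j => v i (A j) / w j - v i (A i) / w i) c ≤ 0) :
    (∀ i, 0 ≤ w i * ℓ i) ∧
    (∀ i j, (v i (A j) + w j * ℓ j) / w j ≤ (v i (A i) + w i * ℓ i) / w i) := by
  have hl0 : ∀ i, 0 ≤ ℓ i := by
    intro i
    have := hub i [i] rfl
    simpa [pathWeight] using this
  constructor
  · intro i
    exact mul_nonneg (hw i).le (hl0 i)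
  · intro i j
    obtain ⟨l, hl, hval⟩ := hmax j
    obtain ⟨j', l', rfl⟩ : ∃ j' l', l = j' :: l' := by
      cases l with
      | nil => simp at hl
      | cons a t => exact ⟨a, t, rfl⟩
    have hj : j = j' := by simpa using hl.symm
    subst hj
    have key := hub i (i :: j :: l') rfl
    have hpw : pathWeight (fun i j => v i (A j) / w j - v i (A i) / w i) (i :: j :: l')
        = (v i (A j) / w j - v i (A i) / w i) + ℓ j := by
      rw [pathWeight]; rw [hval]
    rw [hpw] at key
    have h1 : v i (A j) / w j + ℓ j ≤ v i (A i) / w i + ℓ i := by linarith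
    have e1 : (v i (A j) + w j * ℓ j) / w j = v i (A j) / w j + ℓ j := by
      rw [add_div, mul_div_cancel_left₀ _ (hw _).ne']
    have e2 : (v i (A i) + w i * ℓ i) / w i = v i (A i) / w i + ℓ i := by
      rw [add_div, mul_div_cancel_left₀ _ (hw _).ne']
    rw [e1, e2]; exact h1
end

section
/- An allocation A is weighted envy-freeable (there exists a non-negative subsidy vector making it weighted envy-free) if and only if for every permutation σ of the agents, Σ_i v_i(A_i)/w_i ≥ Σ_i v_i(A_{σ(i)})/w_{σ(i)} (permutation resistance). -/
section Aux

variable {ι : Type*}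

/-- cost of the walk starting at `i` and visiting the vertices of `l` in order,
with edge costs `c`. -/
def pcost (c : ι → ι → ℝ) : ι → List ι → ℝ
  | _, [] => 0
  | i, j :: l => c i j + pcost c j l

lemma pcost_split (c : ι → ι → ℝ) : ∀ (xs : List ι) (a b : ι) (ys : List ι),
    pcost c a (xs ++ b :: ys) = pcost c a (xs ++ [b]) + pcost c b ys
  | [], a, b, ys => by simp [pcost]
  | x :: xs, a, b, ys => by
    show c a x + pcost c x (xs ++ b :: ys) = c a x + pcost c x (xs ++ [b]) + pcost c b ys
    rw [pcost_split c xs x b ys]; ring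

lemma pcost_eq_sum (c : ι → ι → ℝ) : ∀ (t : List ι) (a : ι),
    pcost c a t = ∑ k ∈ Finset.range t.length, c ((a :: t).getD k a) (t.getD k a)
  | [], a => by simp [pcost]
  | b :: t, a => by
    show c a b + pcost c b t = _
    rw [pcost_eq_sum c t b, List.length_cons, Finset.sum_range_succ']
    simp only [List.getD_cons_succ, List.getD_cons_zero]
    rw [add_comm]
    congr 1
    apply Finset.sum_congr rfl
    intro k hk
    rw [Finset.mem_range] at hk
    have h1 : k < (b :: t).length := by simpa using Nat.lt_succ_of_lt hk
    rw [List.getD_eq_getElem _ _ h1, List.getD_eq_getElem _ _ h1,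
      List.getD_eq_getElem _ _ hk, List.getD_eq_getElem _ _ hk]

/-- A non-nodup list decomposes as a prefix, a simple cycle, and a suffix. -/
lemma exists_first_dup : ∀ (m : List ι), ¬ m.Nodup →
    ∃ (xs : List ι) (a : ι) (ys zs : List ι),
      m = xs ++ a :: (ys ++ a :: zs) ∧ (a :: ys).Nodup := by
  intro m
  induction m with
  | nil => intro h; exact absurd List.nodup_nil h
  | cons b t ih =>
    intro h
    by_cases ht : t.Nodup
    · have hb : b ∈ t := by
        by_contra hb
        exact h (List.nodup_cons.mpr ⟨hb, ht⟩)
      obtain ⟨ys, zs, rfl⟩ := List.append_of_mem hb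
      have h1 := List.nodup_append'.mp ht
      refine ⟨[], b, ys, zs, by simp, List.nodup_cons.mpr ⟨?_, h1.1⟩⟩
      intro hb'
      exact h1.2.2 hb' List.mem_cons_self
    · obtain ⟨xs, a, ys, zs, rfl, hnd⟩ := ih ht
      exact ⟨b :: xs, a, ys, zs, rfl, hnd⟩

/-- If all simple cycles have nonpositive cost, every walk is dominated by a
walk that is a simple path. -/
lemma pcost_reduce (c : ι → ι → ℝ)
    (hcyc : ∀ (i : ι) (l : List ι), (i :: l).Nodup → pcost c i (l ++ [i]) ≤ 0) :
    ∀ (L : List ι) (i : ι), ∃ l', (i :: l').Nodup ∧ pcost c i L ≤ pcost c i l' := by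
  classical
  have key : ∀ (n : ℕ) (L : List ι), L.length ≤ n → ∀ i : ι,
      ∃ l', (i :: l').Nodup ∧ pcost c i L ≤ pcost c i l' := by
    intro n
    induction n with
    | zero =>
      intro L hL i
      rw [Nat.le_zero, List.length_eq_zero_iff] at hL
      subst hL
      exact ⟨[], by simp, le_rfl⟩
    | succ n ih =>
      intro L hL i
      by_cases hnd : (i :: L).Nodup
      · exact ⟨L, hnd, le_rfl⟩
      · obtain ⟨xs, a, ys, zs, heq, hays⟩ := exists_first_dup (i :: L) hnd
        match xs, heq with
        | [], heq =>
          rw [List.nil_append, List.cons.injEq] at heq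
          obtain ⟨rfl, rfl⟩ := heq
          have hsplit : pcost c i (ys ++ i :: zs) =
              pcost c i (ys ++ [i]) + pcost c i zs := pcost_split c ys i i zs
          have hzs : zs.length ≤ n := by
            have := hL
            simp only [List.length_append, List.length_cons] at this
            omega
          obtain ⟨l', hnd', hle⟩ := ih zs hzs i
          refine ⟨l', hnd', ?_⟩
          have hc0 := hcyc i ys hays
          calc pcost c i (ys ++ i :: zs) = pcost c i (ys ++ [i]) + pcost c i zs := hsplit
            _ ≤ 0 + pcost c i zs := by linarith
            _ = pcost c i zs := by ring
            _ ≤ pcost c i l' := hle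
        | x :: xs', heq =>
          rw [List.cons_append, List.cons.injEq] at heq
          obtain ⟨rfl, rfl⟩ := heq
          have h1 : pcost c i (xs' ++ a :: (ys ++ a :: zs)) =
              pcost c i (xs' ++ [a]) + pcost c a (ys ++ a :: zs) :=
            pcost_split c xs' i a (ys ++ a :: zs)
          have h2 : pcost c a (ys ++ a :: zs) =
              pcost c a (ys ++ [a]) + pcost c a zs := pcost_split c ys a a zs
          have h3 : pcost c i (xs' ++ a :: zs) =
              pcost c i (xs' ++ [a]) + pcost c a zs := pcost_split c xs' i a zs
          have hlen : (xs' ++ a :: zs).length ≤ n := by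
            have := hL
            simp only [List.length_append, List.length_cons] at this ⊢
            omega
          obtain ⟨l', hnd', hle⟩ := ih (xs' ++ a :: zs) hlen i
          refine ⟨l', hnd', ?_⟩
          have hc0 := hcyc a ys hays
          calc pcost c i (xs' ++ a :: (ys ++ a :: zs))
              = pcost c i (xs' ++ [a]) + (pcost c a (ys ++ [a]) + pcost c a zs) := by
                rw [h1, h2]
            _ ≤ pcost c i (xs' ++ [a]) + pcost c a zs := by linarith
            _ = pcost c i (xs' ++ a :: zs) := h3.symm
            _ ≤ pcost c i l' := hle
  intro L i
  exact key L.length L le_rfl i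

/-- From permutation resistance, every simple cycle has nonpositive cost. -/
lemma cycle_nonpos [Fintype ι] (c : ι → ι → ℝ)
    (hcc : ∀ i, c i i = 0)
    (hcs : ∀ σ : Equiv.Perm ι, ∑ i, c i (σ i) ≤ 0)
    (i : ι) (l : List ι) (h : (i :: l).Nodup) :
    pcost c i (l ++ [i]) ≤ 0 := by
  classical
  set n := l.length with hn
  set m := i :: l with hm
  have hml : m.length = n + 1 := by simp [hm, hn]
  -- the walk cost as a cyclic sum over indices
  have step1 : pcost c i (l ++ [i]) =
      ∑ k ∈ Finset.range (n + 1), c (m.getD k i) (m.getD ((k + 1) % (n + 1)) i) := by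
    rw [pcost_eq_sum]
    have hlen : (l ++ [i]).length = n + 1 := by simp [hn]
    rw [hlen]
    apply Finset.sum_congr rfl
    intro k hk
    rw [Finset.mem_range] at hk
    have hfst : (i :: (l ++ [i])).getD k i = m.getD k i := by
      have : (i :: (l ++ [i])) = m ++ [i] := by simp [hm]
      rw [this, List.getD_append _ _ _ _ (by omega)]
    rw [hfst]
    congr 1
    rcases Nat.lt_or_ge k n with hkn | hkn
    · rw [List.getD_append _ _ _ _ (by omega),
        Nat.mod_eq_of_lt (by omega)]
      show l.getD k i = (i :: l).getD (k + 1) i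
      rw [List.getD_cons_succ]
    · have hk' : k = n := by omega
      subst hk'
      rw [List.getD_append_right _ _ _ _ (by omega), Nat.mod_self]
      simp [hm, hn]
  -- embed the indices into ι
  have hinj : Function.Injective (fun k : Fin (n + 1) => m.getD (k : ℕ) i) := by
    intro k k' hkk
    have hk1 : (k : ℕ) < m.length := by omega
    have hk2 : (k' : ℕ) < m.length := by omega
    simp only [List.getD_eq_getElem _ _ hk1, List.getD_eq_getElem _ _ hk2] at hkk
    have h2 := List.nodup_iff_injective_get.mp h
      (show m.get ⟨k, hk1⟩ = m.get ⟨k', hk2⟩ by simpa using hkk)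
    exact Fin.ext (by simpa using congrArg Fin.val h2)
  set e : Fin (n + 1) ↪ ι := ⟨fun k => m.getD (k : ℕ) i, hinj⟩ with he
  set σ : Equiv.Perm ι := (finRotate (n + 1)).viaEmbedding e with hσ
  have step2 : ∑ k ∈ Finset.range (n + 1), c (m.getD k i) (m.getD ((k + 1) % (n + 1)) i)
      = ∑ k : Fin (n + 1), c (e k) (σ (e k)) := by
    rw [← Fin.sum_univ_eq_sum_range]
    apply Finset.sum_congr rfl
    intro k _
    have h1 : σ (e k) = e (finRotate (n + 1) k) := Equiv.Perm.viaEmbedding_apply _ e k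
    rw [h1, finRotate_succ_apply]
    have hval : ((k + 1 : Fin (n + 1)) : ℕ) = ((k : ℕ) + 1) % (n + 1) := by
      rw [Fin.val_add, Fin.val_one', Nat.add_mod_mod]
    show c (m.getD (k : ℕ) i) (m.getD (((k : ℕ) + 1) % (n + 1)) i) = c (e k) (e (k + 1))
    rw [← hval]
    rfl
  have step3 : ∑ k : Fin (n + 1), c (e k) (σ (e k)) = ∑ x : ι, c x (σ x) := by
    rw [← Finset.sum_map Finset.univ e (fun x => c x (σ x))]
    apply Finset.sum_subset (Finset.subset_univ _)
    intro x _ hx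
    have hx' : x ∉ Set.range e := by
      intro ⟨k, hk⟩
      exact hx (Finset.mem_map.mpr ⟨k, Finset.mem_univ _, hk⟩)
    rw [hσ, Equiv.Perm.viaEmbedding_apply_of_notMem _ e x hx']
    exact hcc x
  rw [step1, step2, step3]
  exact hcs σ

end Aux

/-- An allocation is weighted envy-freeable (some non-negative subsidy vector
makes it weighted envy-free) iff it is permutation resistant. -/
theorem stmt2 {ι H : Type*} [Fintype ι] (v : ι → H → ℝ) (w : ι → ℝ) (A : ι → H)
    (hw : ∀ i, 0 < w i) (hv : ∀ i h, 0 ≤ v i h) (hA : Function.Injective A) :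
    (∃ p : ι → ℝ, (∀ i, 0 ≤ p i) ∧
      ∀ i j, (v i (A j) + p j) / w j ≤ (v i (A i) + p i) / w i) ↔
    (∀ σ : Equiv.Perm ι, ∑ i, v i (A (σ i)) / w (σ i) ≤ ∑ i, v i (A i) / w i) := by
  classical
  constructor
  · rintro ⟨p, hp0, hp⟩ σ
    have h1 : ∀ i, v i (A (σ i)) / w (σ i) + p (σ i) / w (σ i)
        ≤ v i (A i) / w i + p i / w i := by
      intro i
      have := hp i (σ i)
      rwa [add_div, add_div] at this
    have h2 := Finset.sum_le_sum (s := (Finset.univ : Finset ι)) (fun i _ => h1 i)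
    rw [Finset.sum_add_distrib, Finset.sum_add_distrib] at h2
    have h3 : ∑ i, p (σ i) / w (σ i) = ∑ i, p i / w i :=
      Equiv.sum_comp σ (fun i => p i / w i)
    linarith
  · intro hperm
    set c : ι → ι → ℝ := fun i j => v i (A j) / w j - v i (A i) / w i with hc
    have hcc : ∀ i, c i i = 0 := fun i => sub_self _
    have hcs : ∀ σ : Equiv.Perm ι, ∑ i, c i (σ i) ≤ 0 := by
      intro σ
      have h1 := hperm σ
      have h2 : ∑ i, c i (σ i)
          = ∑ i, v i (A (σ i)) / w (σ i) - ∑ i, v i (A i) / w i := by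
        rw [← Finset.sum_sub_distrib]
      rw [h2]
      linarith
    have hcyc := cycle_nonpos c hcc hcs
    have hred := pcost_reduce c hcyc
    haveI : Nonempty {l : List ι // l.Nodup} := ⟨⟨[], List.nodup_nil⟩⟩
    set ℓ : ι → ℝ := fun i => Finset.univ.sup' Finset.univ_nonempty
      (fun L : {l : List ι // l.Nodup} => pcost c i L.1) with hℓ
    have hle : ∀ (i : ι) (l : List ι), pcost c i l ≤ ℓ i := by
      intro i l
      obtain ⟨l', hnd, hcost⟩ := hred l i
      exact hcost.trans (Finset.le_sup'
        (fun L : {l : List ι // l.Nodup} => pcost c i L.1)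
        (Finset.mem_univ ⟨l', (List.nodup_cons.mp hnd).2⟩))
    have hℓ0 : ∀ i, 0 ≤ ℓ i := by
      intro i
      have := hle i []
      simpa [pcost] using this
    have hstep : ∀ i j, c i j + ℓ j ≤ ℓ i := by
      intro i j
      obtain ⟨L, -, hL⟩ := Finset.exists_mem_eq_sup' Finset.univ_nonempty
        (fun L : {l : List ι // l.Nodup} => pcost c j L.1)
      have h1 : c i j + ℓ j = pcost c i (j :: L.1) := by
        rw [hℓ]
        simp only []
        rw [hL]
        rfl
      rw [h1]
      exact hle i _
    refine ⟨fun i => w i * ℓ i, fun i => mul_nonneg (hw i).le (hℓ0 i), ?_⟩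
    intro i j
    have hwj := (hw j).ne'
    have hwi := (hw i).ne'
    have e1 : (v i (A j) + w j * ℓ j) / w j = v i (A j) / w j + ℓ j := by
      rw [add_div, mul_div_cancel_left₀ _ hwj]
    have e2 : (v i (A i) + w i * ℓ i) / w i = v i (A i) / w i + ℓ i := by
      rw [add_div, mul_div_cancel_left₀ _ hwi]
    rw [e1, e2]
    have := hstep i j
    simp only [hc] at this
    linarith
end

section
/- If the weighted envy graph G_A of an allocation A has no positive-weight cycle, then for every permutation σ of agents, Σ_i v_i(A_{σ(i)})/w_{σ(i)} − Σ_i v_i(A_i)/w_i ≤ 0, since the non-fixed points of σ decompose into cycles of G_A each of non-positive weight. -/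
lemma pathWeight_map_range {ι : Type*} (W : ι → ι → ℝ) :
    ∀ (n : ℕ) (g : ℕ → ι),
      pathWeight W ((List.range (n + 1)).map g) = ∑ t ∈ Finset.range n, W (g t) (g (t + 1)) := by
  intro n
  induction n with
  | zero => intro g; simp [pathWeight, List.range_succ]
  | succ n ih =>
    intro g
    have h1 : List.range (n + 1 + 1) = 0 :: (List.range (n + 1)).map Nat.succ :=
      List.range_succ_eq_map
    have h2 : List.range (n + 1) = 0 :: (List.range n).map Nat.succ :=
      List.range_succ_eq_map
    rw [h1, List.map_cons, List.map_map]
    have h3 : (List.range (n + 1)).map (g ∘ Nat.succ) =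
        g 1 :: (List.range n).map (g ∘ Nat.succ ∘ Nat.succ) := by
      rw [h2]; simp [List.map_map, Function.comp]
    rw [h3]
    have h4 : pathWeight W (g 0 :: g 1 :: (List.range n).map (g ∘ Nat.succ ∘ Nat.succ)) =
        W (g 0) (g 1) + pathWeight W (g 1 :: (List.range n).map (g ∘ Nat.succ ∘ Nat.succ)) := rfl
    rw [h4]
    have h5 : g 1 :: (List.range n).map (g ∘ Nat.succ ∘ Nat.succ) =
        (List.range (n + 1)).map (g ∘ Nat.succ) := by rw [h3]
    rw [h5, ih (g ∘ Nat.succ), Finset.sum_range_succ']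
    simp [Function.comp]
    ring

/-- If the weighted envy graph has no positive-weight cycle, then for every
permutation σ, Σ_i v_i(A_{σ(i)})/w_{σ(i)} − Σ_i v_i(A_i)/w_i ≤ 0. -/
theorem stmt4 {ι H : Type*} [Fintype ι] (v : ι → H → ℝ) (w : ι → ℝ) (A : ι → H)
    (hw : ∀ i, 0 < w i) (hv : ∀ i h, 0 ≤ v i h) (hA : Function.Injective A)
    (hnocycle : ∀ c : List ι, c ≠ [] → c.head? = c.getLast? →
      pathWeight (fun i j => v i (A j) / w j - v i (A i) / w i) c ≤ 0) :
    ∀ σ : Equiv.Perm ι,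
      (∑ i, v i (A (σ i)) / w (σ i)) - (∑ i, v i (A i) / w i) ≤ 0 := by
  classical
  set W : ι → ι → ℝ := fun i j => v i (A j) / w j - v i (A i) / w i with hW
  -- main claim by strong induction on support size
  have key : ∀ (n : ℕ) (σ : Equiv.Perm ι), σ.support.card ≤ n →
      ∑ i, W i (σ i) ≤ 0 := by
    intro n
    induction n with
    | zero =>
      intro σ hσ
      have : σ = 1 := by
        rwa [Nat.le_zero, Finset.card_eq_zero, Equiv.Perm.support_eq_empty_iff] at hσ
      subst this
      simp [hW]
    | succ n ih =>
      intro σ hσ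
      by_cases h1 : σ = 1
      · subst h1; simp [hW]
      · obtain ⟨i, hi⟩ : ∃ i, σ i ≠ i := by
          by_contra h; push_neg at h
          exact h1 (Equiv.ext fun x => h x)
        set c := σ.cycleOf i with hc
        have hcyc : c.IsCycle := Equiv.Perm.isCycle_cycleOf σ hi
        have hci : c i = σ i := Equiv.Perm.cycleOf_apply_self σ i
        have hcine : c i ≠ i := by rw [hci]; exact hi
        have hisupp : i ∈ c.support := Equiv.Perm.mem_support.2 hcine
        set m := orderOf c with hm
        have hm1 : 1 ≤ m := orderOf_pos c
        -- agreement of c and σ on powers at i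
        have hpow : ∀ t : ℕ, (c ^ t) i = (σ ^ t) i := fun t =>
          Equiv.Perm.cycleOf_pow_apply_self σ i t
        -- τ removes the cycle of i from σ
        set τ := σ * c⁻¹ with hτ
        have hτ_mem : ∀ j ∈ c.support, τ j = j := by
          intro j hj
          have hk : c⁻¹ j ∈ c.support := by
            rw [← Equiv.Perm.support_inv] at hj ⊢
            exact Equiv.Perm.apply_mem_support.2 hj
          have hsc : σ.SameCycle i (c⁻¹ j) := (Equiv.Perm.mem_support_cycleOf_iff.1 hk).1
          have : c (c⁻¹ j) = σ (c⁻¹ j) := by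
            rw [hc, Equiv.Perm.cycleOf_apply, if_pos hsc]
          have hj' : σ (c⁻¹ j) = j := by
            rw [← this]; exact Equiv.apply_symm_apply c j
          simpa [hτ, Equiv.Perm.mul_apply] using hj'
        have hτ_not : ∀ j ∉ c.support, τ j = σ j := by
          intro j hj
          have : c⁻¹ j = j := by
            rw [← Equiv.Perm.support_inv] at hj
            exact Equiv.Perm.notMem_support.1 hj
          simp [hτ, Equiv.Perm.mul_apply, this]
        -- support of τ is smaller
        have hτsupp : τ.support ⊆ σ.support.erase i := by
          intro j hj
          have hjne : τ j ≠ j := Equiv.Perm.mem_support.1 hj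
          have hjnc : j ∉ c.support := fun h => hjne (hτ_mem j h)
          rw [Finset.mem_erase]
          refine ⟨fun h => hjnc (h ▸ hisupp), Equiv.Perm.mem_support.2 ?_⟩
          rw [← hτ_not j hjnc]; exact hjne
        have hτcard : τ.support.card ≤ n := by
          have := Finset.card_le_card hτsupp
          have h2 : (σ.support.erase i).card < σ.support.card :=
            Finset.card_erase_lt_of_mem (Equiv.Perm.mem_support.2 hi)
          omega
        -- the cycle list
        have hmord : (σ ^ m) i = i := by
          rw [← hpow m, hm, pow_orderOf_eq_one]; rfl
        set g : ℕ → ι := fun t => (σ ^ t) i with hg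
        set L := (List.range (m + 1)).map g with hL
        have hLne : L ≠ [] := by
          simp [hL, List.range_succ]
        have hLhead : L.head? = some i := by
          rw [hL, List.range_succ_eq_map, List.map_cons]
          simp [hg]
        have hLlast : L.getLast? = some i := by
          rw [hL, List.range_succ, List.map_append]
          simp [List.getLast?_concat, hg, hmord]
        have hpath : pathWeight W L ≤ 0 := by
          have := hnocycle L hLne (by rw [hLhead, hLlast])
          simpa [hW] using this
        have hpwsum : pathWeight W L = ∑ t ∈ Finset.range m, W (g t) (g (t + 1)) :=
          pathWeight_map_range W m g
        -- sum over support of c equals sum over range m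
        have hbij : ∑ t ∈ Finset.range m, W (g t) (σ (g t)) = ∑ j ∈ c.support, W j (σ j) := by
          apply Finset.sum_bij (fun t _ => g t)
          · intro t _
            have : (c ^ t) i ∈ c.support := Equiv.Perm.pow_apply_mem_support.2 hisupp
            rwa [hpow t] at this
          · intro s hs t ht hst
            simp only [Finset.mem_range] at hs ht
            rw [hg] at hst
            simp only at hst
            -- wlog s ≤ t
            rcases le_total s t with h | h
            · have : (c ^ (t - s)) i = i := by
                have h2 : (c ^ s) ((c ^ (t - s)) i) = (c ^ s) i := by
                  rw [← Equiv.Perm.mul_apply, ← pow_add, Nat.add_sub_cancel' h,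
                    hpow t, hpow s, hst]
                have := (c ^ s).injective h2
                exact this
              have hdvd : orderOf c ∣ (t - s) := orderOf_dvd_of_pow_eq_one
                ((hcyc.pow_eq_one_iff' hcine).2 this)
              have hlt : t - s < m := by omega
              have := Nat.eq_zero_of_dvd_of_lt hdvd hlt
              omega
            · have : (c ^ (s - t)) i = i := by
                have h2 : (c ^ t) ((c ^ (s - t)) i) = (c ^ t) i := by
                  rw [← Equiv.Perm.mul_apply, ← pow_add, Nat.add_sub_cancel' h,
                    hpow s, hpow t, hst]
                exact (c ^ t).injective h2
              have hdvd : orderOf c ∣ (s - t) := orderOf_dvd_of_pow_eq_one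
                ((hcyc.pow_eq_one_iff' hcine).2 this)
              have hlt : s - t < m := by omega
              have := Nat.eq_zero_of_dvd_of_lt hdvd hlt
              omega
          · intro j hj
            obtain ⟨t0, hgt⟩ := hcyc.exists_pow_eq hcine (Equiv.Perm.mem_support.1 hj)
            refine ⟨t0 % m, Finset.mem_range.2 (Nat.mod_lt _ hm1), ?_⟩
            rw [hg]; simp only
            rw [← hpow (t0 % m), hm, pow_mod_orderOf, hgt]
          · intro t _
            rfl
        -- each term: g (t+1) = σ (g t)
        have hstep : ∀ t, g (t + 1) = σ (g t) := by
          intro t; rw [hg]; simp [pow_succ', Equiv.Perm.mul_apply]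
        have hcsum : ∑ j ∈ c.support, W j (σ j) ≤ 0 := by
          rw [← hbij]
          calc ∑ t ∈ Finset.range m, W (g t) (σ (g t))
              = ∑ t ∈ Finset.range m, W (g t) (g (t + 1)) := by
                apply Finset.sum_congr rfl; intro t _; rw [hstep t]
            _ = pathWeight W L := hpwsum.symm
            _ ≤ 0 := hpath
        -- decompose the full sum
        have hdecomp : ∑ j, W j (σ j) =
            (∑ j ∈ c.support, W j (σ j)) + ∑ j, W j (τ j) := by
          have : ∀ j, W j (σ j) = (if j ∈ c.support then W j (σ j) else 0) + W j (τ j) := by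
            intro j
            by_cases h : j ∈ c.support
            · rw [if_pos h, hτ_mem j h]
              simp [hW]
            · rw [if_neg h, hτ_not j h, zero_add]
          rw [Finset.sum_congr rfl (fun j _ => this j), Finset.sum_add_distrib]
          congr 1
          rw [Finset.sum_ite_mem, Finset.univ_inter]
        rw [hdecomp]
        have := ih τ hτcard
        linarith [hcsum, this]
  intro σ
  have h := key (Fintype.card ι) σ (le_trans (Finset.card_le_univ _) (le_of_eq rfl))
  have : ∑ i, W i (σ i) = (∑ i, v i (A (σ i)) / w (σ i)) - (∑ i, v i (A i) / w i) := by
    rw [hW, Finset.sum_sub_distrib]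
  linarith [h, this.symm.le]
end

section
/- For any weighted envy-freeable allocation A, any envy-eliminating subsidy vector p, and any agent i, the subsidy satisfies p_i ≥ w_i · ℓ(i), where ℓ(i) is the maximum weight of any path starting at i in the weighted envy graph G_A. That is, p* with p*_i = w_i·ℓ(i) is the pointwise minimum envy-eliminating subsidy vector. -/
/-- For a weighted envy-freeable allocation, any envy-eliminating subsidy vector
p satisfies p_i ≥ w_i · ℓ(i), where ℓ(i) is the maximum weight of a path
starting at i in the weighted envy graph. -/
theorem stmt5 {ι H : Type*} (v : ι → H → ℝ) (w : ι → ℝ) (A : ι → H)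
    (hw : ∀ i, 0 < w i) (hv : ∀ i h, 0 ≤ v i h) (hA : Function.Injective A)
    (ℓ : ι → ℝ)
    (hub : ∀ i (l : List ι), l.head? = some i →
      pathWeight (fun i j => v i (A j) / w j - v i (A i) / w i) l ≤ ℓ i)
    (hmax : ∀ i, ∃ l : List ι, l.head? = some i ∧
      pathWeight (fun i j => v i (A j) / w j - v i (A i) / w i) l = ℓ i)
    (p : ι → ℝ) (hp : ∀ i, 0 ≤ p i)
    (hWEF : ∀ i j, (v i (A j) + p j) / w j ≤ (v i (A i) + p i) / w i) :
    ∀ i, w i * ℓ i ≤ p i := by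
  have key : ∀ (l : List ι) (a : ι), l.head? = some a →
      pathWeight (fun i j => v i (A j) / w j - v i (A i) / w i) l ≤ p a / w a := by
    intro l
    induction l with
    | nil => intro a h; simp at h
    | cons x t ih =>
      intro a h
      simp only [List.head?_cons, Option.some_inj] at h
      subst h
      match t, ih with
      | [], _ =>
        simp [pathWeight]
        exact div_nonneg (hp x) (hw x).le
      | b :: t, ih =>
        have h1 : pathWeight (fun i j => v i (A j) / w j - v i (A i) / w i) (b :: t)
            ≤ p b / w b := ih b rfl
        have h2 := hWEF x b
        rw [add_div, add_div] at h2
        simp only [pathWeight]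
        linarith
  intro i
  obtain ⟨l, hl, hlw⟩ := hmax i
  have := key l i hl
  rw [hlw] at this
  have hwi := hw i
  calc w i * ℓ i ≤ w i * (p i / w i) := by
        exact mul_le_mul_of_nonneg_left this hwi.le
    _ = p i := by field_simp
end

section
/- There exists an instance of the house allocation problem with two agents of weights w_1 < w_2 and two houses, with utilities v_1(h_1) = v_1(h_2) = ε (for any 0 ≤ ε < 1) and v_2(h_1) = v_2(h_2) = 1, in which no allocation is weighted envy-freeable: for each of the two allocations, the two-cycle in the weighted envy graph has weight (1/w_1 − 1/w_2)(1 − ε) > 0. -/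
/-- The hard instance: two agents with weights w₁ < w₂, agent 1 values both
houses at ε < 1, agent 2 values both houses at 1. No allocation is weighted
envy-freeable, and the two-cycle of the envy graph has positive weight
(1/w₁ − 1/w₂)(1 − ε). -/
theorem stmt6 (w1 w2 ε : ℝ) (hw1 : 0 < w1) (hlt : w1 < w2)
    (hε0 : 0 ≤ ε) (hε1 : ε < 1) :
    ∀ A : Fin 2 → Fin 2, Function.Injective A →
      (¬ ∃ p : Fin 2 → ℝ, (∀ i, 0 ≤ p i) ∧
        ∀ i j : Fin 2,
          ((if i = 0 then ε else 1) + p j) / (if j = 0 then w1 else w2) ≤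
          ((if i = 0 then ε else 1) + p i) / (if i = 0 then w1 else w2)) ∧
      (ε * (1 / w2 - 1 / w1) + 1 * (1 / w1 - 1 / w2)
        = (1 / w1 - 1 / w2) * (1 - ε)) ∧
      0 < (1 / w1 - 1 / w2) * (1 - ε) := by
  have hw2 : 0 < w2 := hw1.trans hlt
  intro A hA
  refine ⟨?_, by ring, ?_⟩
  · rintro ⟨p, hp, h⟩
    have h1 := h 0 1
    have h2 := h 1 0
    norm_num at h1 h2
    rw [div_le_div_iff₀ hw2 hw1] at h1
    rw [div_le_div_iff₀ hw1 hw2] at h2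
    nlinarith
  · have : 0 < 1 / w1 - 1 / w2 := by
      have := one_div_lt_one_div_of_lt hw1 hlt
      linarith
    nlinarith
end

section
/- For a normalized two-agent house allocation instance (v_1(H) = v_2(H) = 1 with additive utilities and at least two houses), there exist two distinct houses h_1, h_2 with v_1(h_1) ≥ v_2(h_1) and v_2(h_2) ≥ v_1(h_2), and the allocation giving h_i to agent i is weighted envy-freeable for any positive weights w_1, w_2, since its two-cycle weight (v_1(h_2)−v_2(h_2))/w_2 + (v_2(h_1)−v_1(h_1))/w_1 is non-positive. -/
lemma stmt7_pair {H : Type*} [Fintype H] (hH : 2 ≤ Fintype.card H)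
    (v1 v2 : H → ℝ) (hn1 : ∑ h, v1 h = 1) (hn2 : ∑ h, v2 h = 1) :
    ∃ h1 h2 : H, h1 ≠ h2 ∧ v2 h1 ≤ v1 h1 ∧ v1 h2 ≤ v2 h2 := by
  have hne : (Finset.univ : Finset H).Nonempty := by
    rw [Finset.univ_nonempty_iff, ← Fintype.card_pos_iff]; omega
  have ha : ∃ a : H, v2 a ≤ v1 a := by
    by_contra hc
    push_neg at hc
    have := Finset.sum_lt_sum_of_nonempty hne (fun i _ => hc i)
    rw [hn1, hn2] at this; exact lt_irrefl 1 this
  have hb : ∃ b : H, v1 b ≤ v2 b := by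
    by_contra hc
    push_neg at hc
    have := Finset.sum_lt_sum_of_nonempty hne (fun i _ => hc i)
    rw [hn1, hn2] at this; exact lt_irrefl 1 this
  obtain ⟨a, ha⟩ := ha
  obtain ⟨b, hb⟩ := hb
  by_cases hab : a = b
  · subst hab
    obtain ⟨c, hc⟩ := Fintype.exists_ne_of_one_lt_card (by omega) a
    rcases le_total (v1 c) (v2 c) with h | h
    · exact ⟨a, c, Ne.symm hc, ha, h⟩
    · exact ⟨c, a, hc, h, hb⟩
  · exact ⟨a, b, hab, ha, hb⟩

/-- For a normalized two-agent instance there exist distinct houses h₁, h₂ with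
v₁(h₁) ≥ v₂(h₁) and v₂(h₂) ≥ v₁(h₂); the allocation giving hᵢ to agent i is
weighted envy-freeable for any positive weights, its two-cycle weight being
non-positive. -/
theorem stmt7 {H : Type*} [Fintype H] (hH : 2 ≤ Fintype.card H)
    (v1 v2 : H → ℝ) (hv1 : ∀ h, 0 ≤ v1 h) (hv2 : ∀ h, 0 ≤ v2 h)
    (hn1 : ∑ h, v1 h = 1) (hn2 : ∑ h, v2 h = 1)
    (w1 w2 : ℝ) (hw1 : 0 < w1) (hw2 : 0 < w2) :
    ∃ h1 h2 : H, h1 ≠ h2 ∧ v2 h1 ≤ v1 h1 ∧ v1 h2 ≤ v2 h2 ∧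
      (v1 h2 - v2 h2) / w2 + (v2 h1 - v1 h1) / w1 ≤ 0 ∧
      ∃ p : Fin 2 → ℝ, (∀ i, 0 ≤ p i) ∧
        ∀ i j : Fin 2,
          ((if i = 0 then v1 else v2) (if j = 0 then h1 else h2) + p j) /
              (if j = 0 then w1 else w2) ≤
          ((if i = 0 then v1 else v2) (if i = 0 then h1 else h2) + p i) /
              (if i = 0 then w1 else w2) := by
  obtain ⟨h1, h2, hne, h21, h12⟩ := stmt7_pair hH v1 v2 hn1 hn2
  refine ⟨h1, h2, hne, h21, h12, ?_, ?_⟩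
  · have : (v1 h2 - v2 h2) / w2 ≤ 0 := div_nonpos_of_nonpos_of_nonneg (by linarith) hw2.le
    have : (v2 h1 - v1 h1) / w1 ≤ 0 := div_nonpos_of_nonpos_of_nonneg (by linarith) hw1.le
    linarith
  · set d : ℝ := v1 h1 / w1 - v1 h2 / w2 with hd
    refine ⟨if 0 ≤ d then ![0, w2 * d] else ![w1 * (-d), 0], ?_, ?_⟩
    · intro i
      split_ifs with hdd
      · fin_cases i <;> simp <;> positivity
      · push_neg at hdd
        fin_cases i <;> simp
        nlinarith
    · have hp : (if 0 ≤ d then ![0, w2 * d] else ![w1 * (-d), 0]) 1 / w2 -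
          (if 0 ≤ d then ![0, w2 * d] else ![w1 * (-d), 0]) 0 / w1 = d := by
        split_ifs <;> simp <;> field_simp
      set p := (if 0 ≤ d then ![0, w2 * d] else ![w1 * (-d), 0]) with hpdef
      have k1 : v2 h1 / w1 ≤ v1 h1 / w1 := by gcongr
      have k2 : v1 h2 / w2 ≤ v2 h2 / w2 := by gcongr
      have key1 : (v1 h2 + p 1) / w2 ≤ (v1 h1 + p 0) / w1 := by
        rw [add_div, add_div]; linarith
      have key2 : (v2 h1 + p 0) / w1 ≤ (v2 h2 + p 1) / w2 := by
        rw [add_div, add_div]; linarith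
      intro i j
      fin_cases i <;> fin_cases j <;> simp_all
end

section
/- If all agents share an identical utility function v, then every house allocation A is weighted envy-freeable; moreover, letting i* maximize v(A_i)/w_i, the subsidy vector p_j = (w_j/w_{i*})·v(A_{i*}) − v(A_j) (and p_{i*} = 0) is non-negative and makes the outcome weighted envy-free, with (v(A_j)+p_j)/w_j = v(A_{i*})/w_{i*} for all j. -/
/-- With identical utilities every allocation is weighted envy-freeable;
moreover the subsidies p_j = (w_j/w_{i*})·v(A_{i*}) − v(A_j), where i*
maximizes v(A_i)/w_i, are non-negative and equalize all weighted utilities. -/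
theorem stmt9 {ι H : Type*} (v : H → ℝ) (w : ι → ℝ) (A : ι → H)
    (hw : ∀ i, 0 < w i) (hv : ∀ h, 0 ≤ v h) (hA : Function.Injective A)
    (istar : ι) (hstar : ∀ j, v (A j) / w j ≤ v (A istar) / w istar) :
    (∃ p : ι → ℝ, (∀ i, 0 ≤ p i) ∧
      ∀ i j, (v (A j) + p j) / w j ≤ (v (A i) + p i) / w i) ∧
    (∀ j, 0 ≤ (w j / w istar) * v (A istar) - v (A j)) ∧
    ((w istar / w istar) * v (A istar) - v (A istar) = 0) ∧
    (∀ j, (v (A j) + ((w j / w istar) * v (A istar) - v (A j))) / w j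
        = v (A istar) / w istar) := by
  have hpos := hw istar
  have hnn : ∀ j, 0 ≤ (w j / w istar) * v (A istar) - v (A j) := by
    intro j
    have h := hstar j
    have hwj := hw j
    rw [div_le_div_iff₀ hwj hpos] at h
    have : v (A j) ≤ w j / w istar * v (A istar) := by
      rw [div_mul_eq_mul_div, le_div_iff₀ hpos]; linarith
    linarith
  have heq : ∀ j, (v (A j) + ((w j / w istar) * v (A istar) - v (A j))) / w j
      = v (A istar) / w istar := by
    intro j
    have hwj := (hw j).ne'
    field_simp
    ring
  refine ⟨⟨fun j => (w j / w istar) * v (A istar) - v (A j), hnn, ?_⟩, hnn, ?_, heq⟩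
  · intro i j; rw [heq i, heq j]
  · rw [div_self hpos.ne']; ring
end

section
/- In a two-type instance, for any allocation A, the weighted envy graph G_A contains a positive-weight cycle if and only if there exist a large agent i and a small agent j such that w(i,j) + w(j,i) > 0 (a positive-weight cycle of length 2 between agents of different types). -/
lemma pathWeight_mono {ι : Type*} {W E : ι → ι → ℝ} :
    ∀ (c : List ι), (∀ a ∈ c, ∀ b ∈ c, W a b ≤ E a b) →
      pathWeight W c ≤ pathWeight E c
  | [], _ => le_refl _
  | [a], _ => le_refl _
  | a :: b :: l, h => by
      simp only [pathWeight]
      have h1 := h a (by simp) b (by simp)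
      have h2 := pathWeight_mono (b :: l)
        (fun x hx y hy => h x (List.mem_cons_of_mem _ hx) y (List.mem_cons_of_mem _ hy))
      linarith

lemma pathWeight_tele {ι : Type*} (f : ι → ℝ) :
    ∀ (a : ι) (l : List ι), pathWeight (fun i j => f j - f i) (a :: l)
      = f ((a :: l).getLast (by simp)) - f a
  | a, [] => by simp [pathWeight]
  | a, b :: l => by
      simp only [pathWeight]
      rw [pathWeight_tele f b l, List.getLast_cons (by simp : (b :: l) ≠ [])]
      ring

/-- In a two-type instance, the weighted envy graph contains a positive-weight
cycle iff it contains a positive-weight two-cycle between a large agent and a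
small agent. -/
theorem stmt12 {ι H : Type*} (t : ι → Bool)
    (wL wS : ℝ) (hwL : 0 < wL) (hwS : 0 < wS)
    (vL vS : H → ℝ) (A : ι → H) (hA : Function.Injective A) :
    (∃ c : List ι, c ≠ [] ∧ c.head? = c.getLast? ∧
      0 < pathWeight (fun i j =>
        (if t i then vL else vS) (A j) / (if t j then wL else wS) -
        (if t i then vL else vS) (A i) / (if t i then wL else wS)) c) ↔
    (∃ i j : ι, t i = true ∧ t j = false ∧
      0 < (vL (A j) / wS - vL (A i) / wL) + (vS (A i) / wL - vS (A j) / wS)) := by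
  classical
  constructor
  · rintro ⟨c, hne, hcyc, hpos⟩
    by_contra hcon
    push_neg at hcon
    set p : ι → ℝ := fun x =>
      vL (A x) / (if t x then wL else wS) - vS (A x) / (if t x then wL else wS) with hpdef
    have hp : ∀ i j, t i = true → t j = false → p j ≤ p i := by
      intro i j hi hj
      have h0 := hcon i j hi hj
      simp only [hpdef, hi, hj, if_true, Bool.false_eq_true, if_false]
      linarith
    obtain ⟨θ, hθ⟩ : ∃ θ : ℝ, ∀ x ∈ c, t x = false →
        (p x ≤ θ ∧ ∀ y ∈ c, t y = true → θ ≤ p y) := by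
      by_cases hs : ∃ x ∈ c, t x = false
      · obtain ⟨j0, hj0c, hj0⟩ := hs
        obtain ⟨m, hmS, hmmax⟩ := (c.toFinset.filter fun x => t x = false).exists_max_image p
          ⟨j0, by simp [hj0c, hj0]⟩
        simp only [Finset.mem_filter, List.mem_toFinset] at hmS
        refine ⟨p m, fun x hx htx => ⟨hmmax x (by simp [hx, htx]), fun y hy hty => hp y m hty hmS.2⟩⟩
      · push_neg at hs
        exact ⟨0, fun x hx hxf => absurd hxf (hs x hx)⟩
    set F : ι → ℝ := fun x =>
      (if t x then vL else vS) (A x) / (if t x then wL else wS) +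
        (if t x then (0 : ℝ) else θ) with hFdef
    have key : ∀ a ∈ c, ∀ b ∈ c,
        (if t a then vL else vS) (A b) / (if t b then wL else wS) -
          (if t a then vL else vS) (A a) / (if t a then wL else wS) ≤ F b - F a := by
      intro a ha b hb
      rcases Bool.eq_false_or_eq_true (t a) with hta | hta <;>
        rcases Bool.eq_false_or_eq_true (t b) with htb | htb
      · simp only [hFdef, hta, htb, Bool.false_eq_true, if_false]
        linarith
      · -- a large, b small : need p b ≤ θ
        have h1 := (hθ b hb htb).1
        simp only [hpdef, htb, Bool.false_eq_true, if_false] at h1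
        simp only [hFdef, hta, htb, Bool.false_eq_true, if_false, if_true]
        linarith
      · -- a small, b large : need θ ≤ p b
        have h1 := (hθ a ha hta).2 b hb htb
        simp only [hpdef, htb, if_true] at h1
        simp only [hFdef, hta, htb, Bool.false_eq_true, if_false, if_true]
        linarith
      · simp only [hFdef, hta, htb, if_true]
        linarith
    have hle := pathWeight_mono c key
    obtain ⟨a, l, rfl⟩ : ∃ a l, c = a :: l := by
      cases c with
      | nil => exact absurd rfl hne
      | cons a l => exact ⟨a, l, rfl⟩
    rw [pathWeight_tele F a l] at hle
    have hlast : (a :: l).getLast (by simp) = a := by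
      have := hcyc
      rw [List.head?_cons, List.getLast?_eq_getLast (l := a :: l) (by simp)] at this
      exact (Option.some_injective _ this).symm
    rw [hlast] at hle
    linarith
  · rintro ⟨i, j, hi, hj, h⟩
    refine ⟨[i, j, i], by simp, by simp, ?_⟩
    simp only [pathWeight, hi, hj, if_true, if_false, Bool.false_eq_true]
    linarith
end

section
/- In a two-type instance, sort the m houses in descending order of v_L(h) − v_S(h). If (v_L(h_{n_L}) − v_S(h_{n_L}))/w_L ≥ (v_L(h_{m−n_S+1}) − v_S(h_{m−n_S+1}))/w_S, then any allocation giving houses h_1,...,h_{n_L} to the large agents and h_{m−n_S+1},...,h_m to the small agents is weighted envy-freeable: for every large agent i and small agent j, w(i,j) + w(j,i) ≤ 0. -/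
/-- Two-type instances: with houses sorted in descending order of v_L − v_S, if
(v_L(h_{n_L}) − v_S(h_{n_L}))/w_L ≥ (v_L(h_{m−n_S+1}) − v_S(h_{m−n_S+1}))/w_S,
then any allocation giving the first n_L houses to the large agents and the
last n_S houses to the small agents is weighted envy-freeable, every mixed
two-cycle having non-positive weight. -/
theorem stmt13 {ι : Type*} [Fintype ι] (m nL nS : ℕ)
    (hm : nL + nS ≤ m) (hnL : 0 < nL) (hnS : 0 < nS)
    (t : ι → Bool)
    (hcardL : Fintype.card {i // t i = true} = nL)
    (hcardS : Fintype.card {i // t i = false} = nS)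
    (wL wS : ℝ) (hwL : 0 < wL) (hwS : 0 < wS)
    (vL vS : Fin m → ℝ)
    (hsorted : ∀ k k' : Fin m, k ≤ k' → vL k' - vS k' ≤ vL k - vS k)
    (hcond : (vL ⟨m - nS, by omega⟩ - vS ⟨m - nS, by omega⟩) / wS ≤
             (vL ⟨nL - 1, by omega⟩ - vS ⟨nL - 1, by omega⟩) / wL)
    (A : ι → Fin m) (hA : Function.Injective A)
    (hAlarge : ∀ i, t i = true → (A i : ℕ) < nL)
    (hAsmall : ∀ i, t i = false → m - nS ≤ (A i : ℕ)) :
    (∀ i j : ι, t i = true → t j = false →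
      (vL (A j) / wS - vL (A i) / wL) + (vS (A i) / wL - vS (A j) / wS) ≤ 0) ∧
    ∃ p : ι → ℝ, (∀ i, 0 ≤ p i) ∧
      ∀ i j : ι,
        ((if t i then vL else vS) (A j) + p j) / (if t j then wL else wS) ≤
        ((if t i then vL else vS) (A i) + p i) / (if t i then wL else wS) := by
  have hm0 : 0 < m := by omega
  set dS : ℝ := vL ⟨m - nS, by omega⟩ - vS ⟨m - nS, by omega⟩ with hdS
  set dL : ℝ := vL ⟨nL - 1, by omega⟩ - vS ⟨nL - 1, by omega⟩ with hdL
  have hLarge : ∀ i, t i = true → dL ≤ vL (A i) - vS (A i) := by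
    intro i hi
    apply hsorted
    have := hAlarge i hi
    show (A i : ℕ) ≤ nL - 1
    omega
  have hSmall : ∀ j, t j = false → vL (A j) - vS (A j) ≤ dS := by
    intro j hj
    apply hsorted
    have := hAsmall j hj
    show (m - nS : ℕ) ≤ (A j : ℕ)
    omega
  have hmix : ∀ i j : ι, t i = true → t j = false →
      (vL (A j) / wS - vL (A i) / wL) + (vS (A i) / wL - vS (A j) / wS) ≤ 0 := by
    intro i j hi hj
    have h1 := hLarge i hi
    have h2 := hSmall j hj
    have hc : dS * wL ≤ dL * wS := by
      rw [div_le_div_iff₀ hwS hwL] at hcond; linarith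
    have e1 : (vL (A j) - vS (A j)) * wL ≤ dS * wL := by nlinarith
    have e2 : dL * wS ≤ (vL (A i) - vS (A i)) * wS := by nlinarith
    have : (vL (A j) - vS (A j)) / wS ≤ (vL (A i) - vS (A i)) / wL := by
      rw [div_le_div_iff₀ hwS hwL]; linarith
    rw [div_le_div_iff₀ hwS hwL] at this
    have hwL' := hwL.ne'
    have hwS' := hwS.ne'
    have expand : (vL (A j) / wS - vL (A i) / wL) + (vS (A i) / wL - vS (A j) / wS)
        = (vL (A j) - vS (A j)) / wS - (vL (A i) - vS (A i)) / wL := by ring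
    rw [expand, sub_nonpos, div_le_div_iff₀ hwS hwL]
    linarith
  refine ⟨hmix, ?_⟩
  haveI : Nonempty (Fin m) := ⟨⟨0, hm0⟩⟩
  set K : ℝ := Finset.univ.sup' Finset.univ_nonempty
      (fun k : Fin m => max (vS k) (wS / wL * vL k - dS)) with hK
  have hKge : ∀ k : Fin m, vS k ≤ K ∧ wS / wL * vL k - dS ≤ K := by
    intro k
    have := Finset.le_sup' (fun k : Fin m => max (vS k) (wS / wL * vL k - dS))
      (Finset.mem_univ k)
    constructor
    · exact le_trans (le_max_left _ _) this
    · exact le_trans (le_max_right _ _) this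
  refine ⟨fun i => if t i then wL / wS * (K + dS) - vL (A i) else K - vS (A i), ?_, ?_⟩
  · intro i
    cases hi : t i
    · simp only [hi, Bool.false_eq_true, if_false]
      have := (hKge (A i)).1
      linarith
    · simp only [hi, if_true]
      have := (hKge (A i)).2
      have h : wS / wL * vL (A i) ≤ K + dS := by linarith
      have h2 : wL / wS * (wS / wL * vL (A i)) ≤ wL / wS * (K + dS) := by
        apply mul_le_mul_of_nonneg_left h
        positivity
      have heq : wL / wS * (wS / wL * vL (A i)) = vL (A i) := by
        field_simp
      linarith [heq ▸ h2]
  · intro i j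
    cases hi : t i <;> cases hj : t j <;>
      simp only [hi, hj, Bool.false_eq_true, if_true, if_false]
    · exact le_of_eq (by ring)
    · -- i small, j large
      have h1 := hLarge j hj
      have hc : dS * wL ≤ dL * wS := by
        rw [div_le_div_iff₀ hwS hwL] at hcond; linarith
      rw [div_le_div_iff₀ hwL hwS]
      have hE : wL / wS * (K + dS) * wS = wL * (K + dS) := by field_simp
      nlinarith [hE]
    · -- i large, j small
      have h2 := hSmall j hj
      rw [div_le_div_iff₀ hwS hwL]
      have hE : wL / wS * (K + dS) * wS = wL * (K + dS) := by field_simp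
      nlinarith [hE]
    · exact le_of_eq (by ring)
end

section
/- For bi-valued instances (all utilities in {ε, 1} with 0 ≤ ε < 1), an allocation is Pareto optimal if and only if it maximizes the number of agents i with v_i(A_i) = 1 (matched agents). -/
open Classical

section Aux

variable {ι H : Type*} [Fintype ι] [Fintype H] (v : ι → H → ℝ)

/-- neighborhood of a set of agents -/
noncomputable def nbr (W : Finset ι) : Finset H :=
  W.biUnion (fun i => Finset.univ.filter fun h => v i h = 1)

lemma nbr_mono {W W' : Finset ι} (h : W ⊆ W') : nbr v W ⊆ nbr v W' :=
  Finset.biUnion_subset_biUnion_of_subset_left _ h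

/-- Hall condition from a matched injective assignment -/
lemma hall_of_matched (B : ι → H) (hB : Function.Injective B) (M : Finset ι)
    (hM : ∀ i ∈ M, v i (B i) = 1) :
    ∀ W ⊆ M, W.card ≤ (nbr v W).card := by
  intro W hW
  have himg : W.image B ⊆ nbr v W := by
    intro h hh
    obtain ⟨i, hi, rfl⟩ := Finset.mem_image.mp hh
    exact Finset.mem_biUnion.mpr ⟨i, hi, by simp [hM i (hW hi)]⟩
  calc W.card = (W.image B).card := (Finset.card_image_of_injective _ hB).symm
    _ ≤ (nbr v W).card := Finset.card_le_card himg

/-- Extend a Hall set to a full injective allocation, matched on the set -/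
lemma hall_extend (hcard : Fintype.card ι ≤ Fintype.card H) (W : Finset ι)
    (hW : ∀ W' ⊆ W, W'.card ≤ (nbr v W').card) :
    ∃ g : ι → H, Function.Injective g ∧ ∀ i ∈ W, v i (g i) = 1 := by
  classical
  set t : ι → Finset H := fun i =>
    if i ∈ W then Finset.univ.filter (fun h => v i h = 1) else Finset.univ with ht
  have hall : ∀ s : Finset ι, s.card ≤ (s.biUnion t).card := by
    intro s
    by_cases hs : s ⊆ W
    · have : s.biUnion t = nbr v s := by
        apply Finset.biUnion_congr rfl
        intro a ha
        simp [ht, hs ha]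
      rw [this]
      exact hW s hs
    · obtain ⟨x, hxs, hxW⟩ := Finset.not_subset.mp hs
      have h1 : (Finset.univ : Finset H) ⊆ s.biUnion t := by
        intro h _
        exact Finset.mem_biUnion.mpr ⟨x, hxs, by simp [ht, hxW]⟩
      calc s.card ≤ Fintype.card ι := Finset.card_le_univ s
        _ ≤ Fintype.card H := hcard
        _ ≤ (s.biUnion t).card := Finset.card_le_card h1
  obtain ⟨g, hginj, hg⟩ := (Finset.all_card_le_biUnion_card_iff_exists_injective t).mp hall
  refine ⟨g, hginj, fun i hi => ?_⟩
  have := hg i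
  rw [ht] at this
  simp only [hi, if_true, Finset.mem_filter] at this
  exact this.2

/-- Exchange property -/
lemma exchange (S T : Finset ι)
    (hallS : ∀ W ⊆ S, W.card ≤ (nbr v W).card)
    (hallT : ∀ W ⊆ T, W.card ≤ (nbr v W).card)
    (hST : S.card < T.card) :
    ∃ t ∈ T, t ∉ S ∧ ∀ W ⊆ insert t S, W.card ≤ (nbr v W).card := by
  classical
  by_contra hcon
  push_neg at hcon
  -- for each t ∈ T \ S, get a tight witness set
  have key : ∀ t, ∃ W, W ⊆ S ∧ (t ∈ T \ S →
      (nbr v W).card ≤ W.card ∧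
      (Finset.univ.filter fun h => v t h = 1) ⊆ nbr v W) := by
    intro t
    by_cases ht : t ∈ T \ S
    · obtain ⟨htT, htS⟩ := Finset.mem_sdiff.mp ht
      obtain ⟨W', hW'sub, hW'card⟩ := hcon t htT htS
      have htW' : t ∈ W' := by
        by_contra htW'
        have : W' ⊆ S := fun x hx => by
          rcases Finset.mem_insert.mp (hW'sub hx) with h | h
          · exact absurd (h ▸ hx) htW'
          · exact h
        exact absurd (hallS W' this) (not_le.mpr hW'card)
      set W := W'.erase t with hWdef
      have hWS : W ⊆ S := by
        intro x hx
        have hx' := Finset.mem_erase.mp hx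
        rcases Finset.mem_insert.mp (hW'sub hx'.2) with h | h
        · exact absurd h hx'.1
        · exact h
      have hW'eq : W' = insert t W := (Finset.insert_erase htW').symm
      have hcardW : W.card = W'.card - 1 := Finset.card_erase_of_mem htW'
      have hnbrW' : nbr v W' = (Finset.univ.filter fun h => v t h = 1) ∪ nbr v W := by
        rw [hW'eq]; exact Finset.biUnion_insert
      have h1 : (nbr v W).card ≤ W.card := by
        have h2 : nbr v W ⊆ nbr v W' := nbr_mono v (hW'eq ▸ Finset.subset_insert t W)
        have := Finset.card_le_card h2
        have hW'pos : 0 < W'.card := Finset.card_pos.mpr ⟨t, htW'⟩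
        omega
      have heq : nbr v W' = nbr v W := by
        apply (Finset.eq_of_subset_of_card_le (nbr_mono v (hW'eq ▸ Finset.subset_insert t W)) ?_).symm
        calc (nbr v W').card ≤ W'.card - 1 := by omega
          _ = W.card := hcardW.symm
          _ ≤ (nbr v W).card := hallS W hWS
      refine ⟨W, hWS, fun _ => ⟨h1, ?_⟩⟩
      rw [← heq, hnbrW']
      exact Finset.subset_union_left
    · exact ⟨∅, Finset.empty_subset _, fun h => absurd h ht⟩
  choose Wf hWfS hWf using key
  set U := (T \ S).biUnion Wf with hU
  have hUS : U ⊆ S := Finset.biUnion_subset.mpr fun t _ => hWfS t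
  -- union of tight sets has small neighborhood
  have hunion : ∀ D : Finset ι, D ⊆ T \ S →
      (nbr v (D.biUnion Wf)).card ≤ (D.biUnion Wf).card := by
    intro D
    induction D using Finset.induction_on with
    | empty => intro _; simp [nbr]
    | @insert a D ha ih =>
      intro hD
      have haTS : a ∈ T \ S := hD (Finset.mem_insert_self a D)
      have hDT : D ⊆ T \ S := fun x hx => hD (Finset.mem_insert_of_mem hx)
      have hbu : (insert a D).biUnion Wf = Wf a ∪ D.biUnion Wf := Finset.biUnion_insert
      set X := Wf a with hX
      set Y := D.biUnion Wf with hY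
      have hXS : X ⊆ S := hWfS a
      have hYS : Y ⊆ S := Finset.biUnion_subset.mpr fun t _ => hWfS t
      have hnX : (nbr v X).card ≤ X.card := (hWf a haTS).1
      have hnY : (nbr v Y).card ≤ Y.card := ih hDT
      have hnbrU : nbr v (X ∪ Y) = nbr v X ∪ nbr v Y := by
        ext x
        simp only [nbr, Finset.mem_biUnion, Finset.mem_union]
        constructor
        · rintro ⟨i, hi | hi, hx⟩
          · exact Or.inl ⟨i, hi, hx⟩
          · exact Or.inr ⟨i, hi, hx⟩
        · rintro (⟨i, hi, hx⟩ | ⟨i, hi, hx⟩)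
          · exact ⟨i, Or.inl hi, hx⟩
          · exact ⟨i, Or.inr hi, hx⟩
      have hsub : nbr v (X ∩ Y) ⊆ nbr v X ∩ nbr v Y :=
        Finset.subset_inter (nbr_mono v Finset.inter_subset_left)
          (nbr_mono v Finset.inter_subset_right)
      have hXY : (X ∩ Y).card ≤ (nbr v X ∩ nbr v Y).card :=
        le_trans (hallS _ (le_trans Finset.inter_subset_left hXS))
          (Finset.card_le_card hsub)
      have e1 : (nbr v X ∪ nbr v Y).card + (nbr v X ∩ nbr v Y).card
          = (nbr v X).card + (nbr v Y).card := Finset.card_union_add_card_inter _ _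
      have e2 : (X ∪ Y).card + (X ∩ Y).card = X.card + Y.card :=
        Finset.card_union_add_card_inter _ _
      rw [hbu, hnbrU]
      omega
  have hNU : (nbr v U).card ≤ U.card := hunion (T \ S) (le_refl _)
  -- T' := (T \ S) ∪ (T ∩ U)
  set T' := (T \ S) ∪ (T ∩ U) with hT'
  have hT'T : T' ⊆ T :=
    Finset.union_subset Finset.sdiff_subset Finset.inter_subset_left
  have hT'nbr : nbr v T' ⊆ nbr v U := by
    intro h hh
    obtain ⟨t, htT', hth⟩ := Finset.mem_biUnion.mp hh
    rcases Finset.mem_union.mp htT' with ht | ht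
    · have := (hWf t ht).2 hth
      exact nbr_mono v (Finset.subset_biUnion_of_mem Wf ht) this
    · exact Finset.mem_biUnion.mpr ⟨t, (Finset.mem_inter.mp ht).2, hth⟩
  have hT'card : T'.card ≤ U.card :=
    calc T'.card ≤ (nbr v T').card := hallT T' hT'T
      _ ≤ (nbr v U).card := Finset.card_le_card hT'nbr
      _ ≤ U.card := hNU
  have hdisj : Disjoint (T \ S) (T ∩ U) := by
    rw [Finset.disjoint_left]
    intro x hx hx'
    exact (Finset.mem_sdiff.mp hx).2 (hUS (Finset.mem_inter.mp hx').2)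
  have hT'eq : T'.card = (T \ S).card + (T ∩ U).card :=
    Finset.card_union_of_disjoint hdisj
  have hUTcard : (U ∩ T).card + (U \ T).card = U.card := Finset.card_inter_add_card_sdiff U T
  have hcomm : (T ∩ U).card = (U ∩ T).card := by rw [Finset.inter_comm]
  have hUT_ST : (U \ T).card ≤ (S \ T).card :=
    Finset.card_le_card (Finset.sdiff_subset_sdiff hUS (le_refl T))
  have hTsplit : (T \ S).card + (T ∩ S).card = T.card := Finset.card_sdiff_add_card_inter T S
  have hSsplit : (S \ T).card + (S ∩ T).card = S.card := Finset.card_sdiff_add_card_inter S T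
  have hic : (T ∩ S).card = (S ∩ T).card := by rw [Finset.inter_comm]
  omega

end Aux

/-- For bi-valued instances (utilities in {ε, 1}, 0 ≤ ε < 1), an allocation is
Pareto optimal iff it maximizes the number of matched agents. -/
theorem stmt15 {ι H : Type*} [Fintype ι] [Fintype H]
    (hcard : Fintype.card ι ≤ Fintype.card H)
    (ε : ℝ) (hε0 : 0 ≤ ε) (hε1 : ε < 1)
    (v : ι → H → ℝ) (hv : ∀ i h, v i h = ε ∨ v i h = 1)
    (A : ι → H) (hA : Function.Injective A) :
    (¬ ∃ A' : ι → H, Function.Injective A' ∧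
      (∀ i, v i (A i) ≤ v i (A' i)) ∧ (∃ i, v i (A i) < v i (A' i))) ↔
    (∀ A' : ι → H, Function.Injective A' →
      (Finset.univ.filter fun i => v i (A' i) = 1).card ≤
      (Finset.univ.filter fun i => v i (A i) = 1).card) := by
  classical
  have hvle : ∀ i h, v i h ≤ 1 := fun i h => by
    rcases hv i h with h1 | h1 <;> rw [h1]; exact le_of_lt hε1
  have hvge : ∀ i h, ε ≤ v i h := fun i h => by
    rcases hv i h with h1 | h1 <;> rw [h1]; exact le_of_lt hε1
  constructor
  · -- Pareto optimal → maximizes matched count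
    intro hpo A' hA'
    by_contra hlt
    push_neg at hlt
    set S := Finset.univ.filter (fun i => v i (A i) = 1) with hS
    set T := Finset.univ.filter (fun i => v i (A' i) = 1) with hT
    have hallS : ∀ W ⊆ S, W.card ≤ (nbr v W).card :=
      hall_of_matched v A hA S (fun i hi => (Finset.mem_filter.mp hi).2)
    have hallT : ∀ W ⊆ T, W.card ≤ (nbr v W).card :=
      hall_of_matched v A' hA' T (fun i hi => (Finset.mem_filter.mp hi).2)
    obtain ⟨t, htT, htS, hallI⟩ := exchange v S T hallS hallT hlt
    obtain ⟨g, hginj, hg⟩ := hall_extend v hcard (insert t S) hallI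
    apply hpo
    refine ⟨g, hginj, fun i => ?_, t, ?_⟩
    · by_cases hi : i ∈ insert t S
      · rw [hg i hi]; exact hvle i (A i)
      · have hiS : i ∉ S := fun h => hi (Finset.mem_insert_of_mem h)
        have : v i (A i) ≠ 1 := fun h => hiS (Finset.mem_filter.mpr ⟨Finset.mem_univ i, h⟩)
        rcases hv i (A i) with h1 | h1
        · rw [h1]; exact hvge i (g i)
        · exact absurd h1 this
    · have h1 : v t (g t) = 1 := hg t (Finset.mem_insert_self t S)
      have : v t (A t) ≠ 1 := fun h => htS (Finset.mem_filter.mpr ⟨Finset.mem_univ t, h⟩)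
      rcases hv t (A t) with h2 | h2
      · rw [h1, h2]; exact hε1
      · exact absurd h2 this
  · -- maximizes matched count → Pareto optimal
    intro hmax ⟨A', hA', hdom, i0, hstrict⟩
    set S := Finset.univ.filter (fun i => v i (A i) = 1) with hS
    set T := Finset.univ.filter (fun i => v i (A' i) = 1) with hT
    have hsub : S ⊆ T := by
      intro i hi
      have h1 : v i (A i) = 1 := (Finset.mem_filter.mp hi).2
      have h2 : (1 : ℝ) ≤ v i (A' i) := h1 ▸ hdom i
      rcases hv i (A' i) with h3 | h3
      · exfalso; rw [h3] at h2; linarith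
      · exact Finset.mem_filter.mpr ⟨Finset.mem_univ i, h3⟩
    have hi0T : i0 ∈ T := by
      have h2 : ε ≤ v i0 (A i0) := hvge i0 (A i0)
      have h3 : ε < v i0 (A' i0) := lt_of_le_of_lt h2 hstrict
      rcases hv i0 (A' i0) with h4 | h4
      · exfalso; rw [h4] at h3; exact lt_irrefl _ h3
      · exact Finset.mem_filter.mpr ⟨Finset.mem_univ i0, h4⟩
    have hi0S : i0 ∉ S := by
      intro h
      have h1 : v i0 (A i0) = 1 := (Finset.mem_filter.mp h).2
      have := lt_of_lt_of_le (h1 ▸ hstrict) (hvle i0 (A' i0))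
      exact lt_irrefl _ this
    have : S.card < T.card := Finset.card_lt_card ⟨hsub, fun h => hi0S (h hi0T)⟩
    exact absurd (hmax A' hA') (not_le.mpr this)
end

section
/- For bi-valued instances with m = n houses and utilities in {0, 1}, every weighted envy-freeable allocation is Pareto optimal. Specifically, if the matching corresponding to allocation A is not maximum, then there is a permutation σ of agents (cycling along an augmenting path extended by the agent holding the last house) with Σ_i v_i(A_{σ(i)})/w_{σ(i)} > Σ_i v_i(A_i)/w_i, violating permutation resistance. -/
open Classical


/-- Iterates of a permutation are periodic modulo a period. -/
lemma perm_pow_mod {ι : Type*} (σ : Equiv.Perm ι) (x : ι) (d : ℕ)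
    (hd : (σ ^ d) x = x) (k : ℕ) : (σ ^ k) x = (σ ^ (k % d)) x := by
  have hq : ∀ q : ℕ, ((σ ^ d) ^ q) x = x := by
    intro q
    induction q with
    | zero => simp
    | succ q ih => rw [pow_succ, Equiv.Perm.mul_apply, hd, ih]
  conv_lhs => rw [← Nat.mod_add_div k d]
  rw [pow_add, Equiv.Perm.mul_apply, pow_mul, hq]

/-- Existence of an "alternating chain": consecutive σ-iterates inside `T`
with both endpoints (start, and image of the end) outside `S`. -/
lemma chain_exists {ι : Type*} [Fintype ι] [DecidableEq ι] (σ : Equiv.Perm ι) :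
    ∀ (k : ℕ) (S T : Finset ι), S.card = k → S.card < T.card →
    ∃ (n : ℕ) (z : ι), (∀ m ≤ n, (σ ^ m) z ∈ T) ∧ z ∉ S ∧ (σ ^ (n + 1)) z ∉ S := by
  intro k
  induction k with
  | zero =>
    intro S T hSk hST
    have hS : S = ∅ := Finset.card_eq_zero.mp hSk
    obtain ⟨i1, hi1⟩ := Finset.card_pos.mp (hSk ▸ hST)
    refine ⟨0, i1, ?_, ?_, ?_⟩
    · intro m hm; interval_cases m; simpa using hi1
    · simp [hS]
    · simp [hS]
  | succ k ih =>
    intro S T hSk hST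
    -- pigeonhole: some i1 ∈ T with σ i1 ∉ S
    have hpig : ∃ i1 ∈ T, σ i1 ∉ S := by
      by_contra hno
      push_neg at hno
      have hsub : T.image σ ⊆ S := by
        intro x hx
        obtain ⟨i, hi, rfl⟩ := Finset.mem_image.mp hx
        exact hno i hi
      have := Finset.card_le_card hsub
      rw [Finset.card_image_of_injective _ σ.injective] at this
      omega
    obtain ⟨i1, hi1T, hi1σ⟩ := hpig
    by_cases h1 : i1 ∈ S
    · have hS' : (S.erase i1).card = k := by
        rw [Finset.card_erase_of_mem h1, hSk]; omega
      have hT' : (S.erase i1).card < (T.erase i1).card := by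
        rw [hS', Finset.card_erase_of_mem hi1T]; omega
      obtain ⟨n, z, hTn, hz0, hz1⟩ := ih (S.erase i1) (T.erase i1) hS' hT'
      have hzz : z ∉ S := by
        have hzT : z ∈ T.erase i1 := by simpa using hTn 0 (Nat.zero_le n)
        have hzne : z ≠ i1 := (Finset.mem_erase.mp hzT).1
        intro hzS
        exact hz0 (Finset.mem_erase.mpr ⟨hzne, hzS⟩)
      by_cases h2 : (σ ^ (n + 1)) z = i1
      · refine ⟨n + 1, z, ?_, hzz, ?_⟩
        · intro m hm
          rcases Nat.lt_or_ge m (n + 1) with hm' | hm'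
          · exact Finset.erase_subset _ _ (hTn m (Nat.lt_succ_iff.mp hm'))
          · have : m = n + 1 := le_antisymm hm hm'
            rw [this, h2]; exact hi1T
        · have : (σ ^ (n + 2)) z = σ i1 := by
            rw [← h2, ← Equiv.Perm.mul_apply, ← pow_succ']
          rw [this]; exact hi1σ
      · refine ⟨n, z, ?_, hzz, ?_⟩
        · intro m hm; exact Finset.erase_subset _ _ (hTn m hm)
        · intro hmem
          exact hz1 (Finset.mem_erase.mpr ⟨h2, hmem⟩)
    · exact ⟨0, i1, fun m hm => by interval_cases m; simpa using hi1T,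
        h1, by simpa using hi1σ⟩

lemma improve_exists {ι : Type*} [Fintype ι] [DecidableEq ι] (σ : Equiv.Perm ι)
    (S T : Finset ι)
    (hchain : ∃ (n : ℕ) (z : ι),
      (∀ m ≤ n, (σ ^ m) z ∈ T) ∧ z ∉ S ∧ (σ ^ (n + 1)) z ∉ S) :
    ∃ (τ : Equiv.Perm ι) (j : ι), j ∉ S ∧ τ j ∈ T ∧ σ (τ j) = j ∧
      ∀ x ∈ S, (τ x ∈ T ∧ σ (τ x) = x) ∨ τ x = x := by
  obtain ⟨n, z, hT, hz0, hz1⟩ := hchain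
  have hcomp : ∀ (x : ι) (k1 k2 : ℕ), (σ ^ k1) ((σ ^ k2) x) = (σ ^ (k1 + k2)) x := by
    intro x k1 k2; rw [pow_add, Equiv.Perm.mul_apply]
  have hstep : ∀ (x : ι) (k : ℕ), σ ((σ ^ k) x) = (σ ^ (k + 1)) x := by
    intro x k; rw [← Equiv.Perm.mul_apply, ← pow_succ']
  have hidx : ∀ (x : ι) (k1 k2 : ℕ), k1 = k2 → (σ ^ k1) x = (σ ^ k2) x := by
    rintro x k1 k2 rfl; rfl
  by_cases hinj : ∀ a ≤ n + 1, ∀ b ≤ n + 1, (σ ^ a) z = (σ ^ b) z → a = b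
  · -- chain case: nodup path, cycle it in reverse
    set l : List ι := (List.range (n + 2)).map (fun i => (σ ^ (n + 1 - i)) z) with hl
    have hlen : l.length = n + 2 := by simp [hl]
    have hnodup : l.Nodup := by
      refine List.Nodup.map_on ?_ List.nodup_range
      intro a ha b hb hab
      rw [List.mem_range] at ha hb
      have := hinj (n + 1 - a) (by omega) (n + 1 - b) (by omega) hab
      omega
    have happ : ∀ i, i < n + 2 →
        l.formPerm ((σ ^ (n + 1 - i)) z) = (σ ^ (n + 1 - (i + 1) % (n + 2))) z := by
      intro i hi
      have h1 : i < l.length := by rw [hlen]; omega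
      have e := List.formPerm_apply_getElem l hnodup i h1
      simp only [hl, List.getElem_map, List.getElem_range, List.length_map,
        List.length_range] at e
      rwa [← hl] at e
    have e0 : l.formPerm ((σ ^ (n + 1)) z) = (σ ^ n) z := by
      have e := happ 0 (by omega)
      have h1 : (0 + 1) % (n + 2) = 1 := Nat.mod_eq_of_lt (by omega)
      rw [h1] at e
      rw [show n + 1 - 0 = n + 1 by omega, show n + 1 - 1 = n by omega] at e
      exact e
    refine ⟨l.formPerm, (σ ^ (n + 1)) z, hz1, ?_, ?_, ?_⟩
    · rw [e0]; exact hT n (le_refl n)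
    · rw [e0, hstep]
    · intro x hxS
      by_cases hxl : x ∈ l
      · left
        rw [hl, List.mem_map] at hxl
        obtain ⟨i, hi, hix⟩ := hxl
        rw [List.mem_range] at hi
        have hi0 : i ≠ 0 := by
          rintro rfl
          simp only [Nat.sub_zero] at hix
          rw [hix] at hz1; exact hz1 hxS
        have hin : i ≠ n + 1 := by
          rintro rfl
          simp only [Nat.sub_self, pow_zero, Equiv.Perm.coe_one, id_eq] at hix
          rw [hix] at hz0; exact hz0 hxS
        have e := happ i hi
        have h1 : (i + 1) % (n + 2) = i + 1 := Nat.mod_eq_of_lt (by omega)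
        rw [h1, hix] at e
        rw [e]
        refine ⟨hT (n + 1 - (i + 1)) (by omega), ?_⟩
        rw [hstep, ← hix]
        exact hidx z _ _ (by omega)
      · right
        exact List.formPerm_apply_of_notMem hxl
  · -- cycle case
    push_neg at hinj
    obtain ⟨a', ha', b', hb', heq', hne'⟩ := hinj
    have key : ∀ a b : ℕ, a ≤ n + 1 → b ≤ n + 1 → (σ ^ a) z = (σ ^ b) z → a < b →
        ∃ (τ : Equiv.Perm ι) (j : ι), j ∉ S ∧ τ j ∈ T ∧ σ (τ j) = j ∧
          ∀ x ∈ S, (τ x ∈ T ∧ σ (τ x) = x) ∨ τ x = x := by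
      clear heq' hne' ha' hb' a' b'
      intro a b ha hb heq hab
      set d : ℕ := b - a with hd
      have hd0 : 0 < d := by omega
      have hda : (σ ^ d) ((σ ^ a) z) = (σ ^ a) z := by
        rw [hcomp, hidx z _ b (by omega), ← heq]
      set y : ι := (σ ^ (n + 1)) z with hy
      have hdy : (σ ^ d) y = y := by
        rw [hy, hcomp, hidx z _ ((n + 1 - a) + b) (by omega), ← hcomp, ← heq,
          hcomp, hidx z _ (n + 1) (by omega)]
      have horb : ∀ m : ℕ, (σ ^ m) y ∈ T := by
        intro m
        have hlt : (m + (n + 1) - a) % d < d := Nat.mod_lt _ hd0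
        have e1 : (σ ^ m) y = (σ ^ ((m + (n + 1) - a) % d + a)) z := by
          rw [hy, hcomp, hidx z _ ((m + (n + 1) - a) + a) (by omega), ← hcomp,
            perm_pow_mod σ _ d hda, hcomp]
        rw [e1]
        exact hT _ (by omega)
      have hex : ∃ m : ℕ, 0 < m ∧ (σ ^ m) y = y := ⟨d, hd0, hdy⟩
      set p : ℕ := Nat.find hex with hp
      obtain ⟨hp0, hpy⟩ : 0 < p ∧ (σ ^ p) y = y := Nat.find_spec hex
      have hmin : ∀ m, m < p → ¬(0 < m ∧ (σ ^ m) y = y) := fun m hm => Nat.find_min hex hm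
      set l : List ι := (List.range p).map (fun i => (σ ^ (p - i)) y) with hl
      have hlen : l.length = p := by simp [hl]
      have hnodup : l.Nodup := by
        refine List.Nodup.map_on ?_ List.nodup_range
        intro i1 hi1 i2 hi2 hi12
        rw [List.mem_range] at hi1 hi2
        by_contra hne2
        have main : ∀ u t : ℕ, t < u → u ≤ p → 1 ≤ t → (σ ^ u) y = (σ ^ t) y → False := by
          intro u t htu hup ht1 hequt
          have e2 : (σ ^ t) ((σ ^ (u - t)) y) = (σ ^ t) y := by
            rw [hcomp, hidx y _ u (by omega), hequt]
          have h5 : (σ ^ (u - t)) y = y := (σ ^ t).injective e2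
          exact hmin (u - t) (by omega) ⟨by omega, h5⟩
        rcases Nat.lt_or_ge i1 i2 with h | h
        · exact main (p - i1) (p - i2) (by omega) (by omega) (by omega) hi12
        · exact main (p - i2) (p - i1) (by omega) (by omega) (by omega) hi12.symm
      have happ : ∀ i, i < p →
          l.formPerm ((σ ^ (p - i)) y) = (σ ^ (p - (i + 1) % p)) y := by
        intro i hi
        have h1 : i < l.length := by rw [hlen]; omega
        have e := List.formPerm_apply_getElem l hnodup i h1
        simp only [hl, List.getElem_map, List.getElem_range, List.length_map,
          List.length_range] at e
        rwa [← hl] at e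
      have huni : ∀ (i : ℕ), i < p →
          l.formPerm ((σ ^ (p - i)) y) ∈ T ∧
          σ (l.formPerm ((σ ^ (p - i)) y)) = (σ ^ (p - i)) y := by
        intro i hi
        rw [happ i hi]
        refine ⟨horb _, ?_⟩
        rw [hstep]
        rcases Nat.lt_or_ge (i + 1) p with h | h
        · rw [Nat.mod_eq_of_lt h]
          exact hidx y _ _ (by omega)
        · have hip : i + 1 = p := by omega
          rw [hip, Nat.mod_self, Nat.sub_zero,
            hidx y (p + 1) (1 + p) (by omega), ← hcomp, hpy]
          exact hidx y _ _ (by omega)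
      have hyl : y = (σ ^ (p - 0)) y := by
        rw [Nat.sub_zero]; exact hpy.symm
      refine ⟨l.formPerm, y, hz1, ?_, ?_, ?_⟩
      · rw [hyl]; exact (huni 0 hp0).1
      · rw [hyl]; exact (huni 0 hp0).2
      · intro x hxS
        by_cases hxl : x ∈ l
        · left
          rw [hl, List.mem_map] at hxl
          obtain ⟨i, hi, hix⟩ := hxl
          rw [List.mem_range] at hi
          rw [← hix]
          exact huni i hi
        · right
          exact List.formPerm_apply_of_notMem hxl
    rcases Ne.lt_or_gt hne' with h | h
    · exact key a' b' ha' hb' heq' h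
    · exact key b' a' hb' ha' heq'.symm h

/-- For bi-valued instances with m = n and utilities in {0,1}, every weighted
envy-freeable (i.e., permutation resistant) allocation is Pareto optimal: it
maximizes the number of matched agents. -/
theorem stmt16 {ι H : Type*} [Fintype ι] [Fintype H]
    (hcard : Fintype.card ι = Fintype.card H)
    (w : ι → ℝ) (hw : ∀ i, 0 < w i)
    (v : ι → H → ℝ) (hv : ∀ i h, v i h = 0 ∨ v i h = 1)
    (A : ι → H) (hA : Function.Bijective A)
    (hperm : ∀ σ : Equiv.Perm ι,
      ∑ i, v i (A (σ i)) / w (σ i) ≤ ∑ i, v i (A i) / w i) :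
    ∀ B : ι → H, Function.Bijective B →
      (Finset.univ.filter fun i => v i (B i) = 1).card ≤
      (Finset.univ.filter fun i => v i (A i) = 1).card := by
  classical
  intro B hB
  by_contra hc
  push_neg at hc
  set S : Finset ι := Finset.univ.filter (fun i => v i (A i) = 1) with hS
  set T : Finset ι := Finset.univ.filter (fun i => v i (B i) = 1) with hT
  let eA : ι ≃ H := Equiv.ofBijective A hA
  set σ : Equiv.Perm ι := (Equiv.ofBijective B hB).trans eA.symm with hσ
  have hAσ : ∀ i, A (σ i) = B i := fun i => eA.apply_symm_apply (B i)
  obtain ⟨τ, j, hjS, hjT, hjσ, hcov⟩ := improve_exists σ S T (chain_exists σ S.card S T rfl hc)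
  have hmatched : ∀ x, τ x ∈ T → σ (τ x) = x → v (τ x) (A x) = 1 := by
    intro x h1 h2
    have h3 : v (τ x) (B (τ x)) = 1 := (Finset.mem_filter.mp h1).2
    rw [← hAσ (τ x), h2] at h3
    exact h3
  have hone : ∀ x, x ∈ S → v x (A x) = 1 := fun x hx => (Finset.mem_filter.mp hx).2
  have hzero : ∀ x, x ∉ S → v x (A x) = 0 := by
    intro x hx
    rcases hv x (A x) with h | h
    · exact h
    · exact absurd (Finset.mem_filter.mpr ⟨Finset.mem_univ x, h⟩) hx
  have hlt : ∑ x, v x (A x) / w x < ∑ x, v (τ x) (A x) / w x := by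
    apply Finset.sum_lt_sum
    · intro i _
      by_cases hiS : i ∈ S
      · rcases hcov i hiS with ⟨h2, h3⟩ | h4
        · rw [hone i hiS, hmatched i h2 h3]
        · rw [h4]
      · rw [hzero i hiS, zero_div]
        rcases hv (τ i) (A i) with h | h <;> rw [h]
        · simp
        · exact div_nonneg zero_le_one (hw i).le
    · refine ⟨j, Finset.mem_univ j, ?_⟩
      rw [hzero j hjS, hmatched j hjT hjσ, zero_div]
      exact div_pos one_pos (hw j)
  have hfin := hperm τ⁻¹
  have hre : ∑ i, v i (A (τ⁻¹ i)) / w (τ⁻¹ i) = ∑ x, v (τ x) (A x) / w x := by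
    rw [← Equiv.sum_comp τ (fun i => v i (A (τ⁻¹ i)) / w (τ⁻¹ i))]
    apply Finset.sum_congr rfl
    intro x _
    simp
  rw [hre] at hfin
  linarith
end
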